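/- Let T_N(K) be the K-th order statistic of N i.i.d. shifted exponential variables with rate λ_s > 0 and shift c ≥ 0, and let T_D > c. Then E[T_N(K)² | T_N(K) < T_D] = (1/(1-Z_K)) · Σ_{j=0}^{K-1} (B_{K,j}/(λ_s² U_{K,j}³)) · [(1 + cλ_s U_{K,j})² + 1 - ((1 + T_D λ_s U_{K,j})² + 1)·e^{-λ_s U_{K,j}(T_D-c)}], where B_{K,j} = K·binom(N,K)·binom(K-1,j)·(-1)^j, U_{K,j} = N-K+1+j, and Z_K = Σ_{i=0}^{K-1} B_{K,i}·e^{-λ_s U_{K,i}(T_D-c)}/U_{K,i}. -/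

import Mathlib

open MeasureTheory ProbabilityTheory Real

/-- The shifted exponential distribution with rate `l` and shift `c`:
density `l * exp (-l*(t-c))` for `t > c`, `0` otherwise. -/
noncomputable def shiftedExp (l c : ℝ) : MeasureTheory.Measure ℝ :=
  MeasureTheory.volume.withDensity
    (fun t => ENNReal.ofReal (if c < t then l * Real.exp (-l * (t - c)) else 0))

/-- The `K`-th order statistic (K-th smallest value) of the family `T` evaluated at `ω`. -/
noncomputable def orderStat {Ω : Type*} {N : ℕ} (T : Fin N → Ω → ℝ) (K : ℕ) (ω : Ω) : ℝ :=
  sInf {x : ℝ | K ≤ Nat.card {i : Fin N // T i ω ≤ x}}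

/-!
The event `T_N(K) ≤ t` says that at least `K` of the `N` samples are `≤ t`, so with
`q = e^{-λ_s (t - c)}` its probability is the binomial tail `∑_{m ≥ K} C(N,m) (1-q)^m q^(N-m)`.
As a function of `q` this tail has derivative `-K C(N,K) q^(N-K) (1-q)^(K-1)` (the termwise
derivatives telescope); expanding `(1-q)^(K-1)` and integrating back from `q = 1` rewrites the
tail as `∑_j B_j / U_j (1 - q^{U_j})`. Hence `T_N(K)` has density
`∑_j B_j λ_s e^{-λ_s U_j (t - c)}` on `(c, ∞)`, and the conditional second moment is a quotient
of two elementary integrals of this density over `(c, T_D]`. At `q = 0` the identity gives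
`∑_j B_j / U_j = 1`, which turns the mass `∑_j B_j / U_j (1 - e^{-λ_s U_j (T_D - c)})` into
`1 - Z_K`.
-/

-- `B_{K,j}` and `U_{K,j}` of the statement.
def orderStatCoeff (N K j : ℕ) : ℝ :=
  (K : ℝ) * (N.choose K : ℝ) * ((K - 1).choose j : ℝ) * (-1) ^ j

def orderStatRate (N K j : ℕ) : ℝ := (N : ℝ) - K + 1 + j

section BinomialTail

open Finset

variable {N K : ℕ}

theorem orderStatRate_eq_natCast (hKN : K ≤ N) (j : ℕ) :
    orderStatRate N K j = ((N - K + 1 + j : ℕ) : ℝ) := by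
  rw [orderStatRate]; push_cast [Nat.cast_sub hKN]; ring

theorem orderStatRate_pos (hKN : K ≤ N) (j : ℕ) : 0 < orderStatRate N K j := by
  rw [orderStatRate_eq_natCast hKN]; positivity

theorem sum_range_choose_mul_neg_one_pow_mul_pow (hK : 1 ≤ K) (q : ℝ) :
    ∑ j ∈ range K, ((K - 1).choose j : ℝ) * (-1) ^ j * q ^ j = (1 - q) ^ (K - 1) := by
  rw [sub_eq_neg_add, add_pow, Nat.sub_add_cancel hK]
  refine sum_congr rfl fun j _ => ?_
  rw [neg_pow]; ring

theorem sum_orderStatCoeff_mul_pow (hK : 1 ≤ K) (q : ℝ) :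
    ∑ j ∈ range K, orderStatCoeff N K j * q ^ (N - K + j)
      = K * N.choose K * q ^ (N - K) * (1 - q) ^ (K - 1) := by
  rw [← sum_range_choose_mul_neg_one_pow_mul_pow hK, mul_sum]
  refine sum_congr rfl fun j _ => ?_
  rw [orderStatCoeff, pow_add]; ring

/-- The derivative is `b (m + 1) - b m` for `b m = m C(N, m) (1 - q) ^ (m - 1) q ^ (N - m)`,
since `(m + 1) C(N, m + 1) = (N - m) C(N, m)`; summed over `m` it telescopes. -/
theorem hasDerivAt_choose_mul_one_sub_pow_mul_pow (N m : ℕ) (q : ℝ) :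
    HasDerivAt (fun q : ℝ => (N.choose m : ℝ) * (1 - q) ^ m * q ^ (N - m))
      ((m + 1 : ℕ) * (N.choose (m + 1) : ℝ) * (1 - q) ^ (m + 1 - 1) * q ^ (N - (m + 1))
        - m * (N.choose m : ℝ) * (1 - q) ^ (m - 1) * q ^ (N - m)) q := by
  have h := (((hasDerivAt_id' q).const_sub 1).pow m |>.const_mul (N.choose m : ℝ)).mul
    (hasDerivAt_pow (N - m) q)
  refine h.congr_deriv ?_
  have hchoose :
      ((m + 1 : ℕ) : ℝ) * (N.choose (m + 1) : ℝ) = (N.choose m : ℝ) * (N - m : ℕ) := by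
    rw [mul_comm]; exact_mod_cast Nat.choose_succ_right_eq N m
  rw [hchoose, Nat.add_sub_cancel, Nat.sub_add_eq, Pi.pow_apply]
  ring

theorem hasDerivAt_sum_Icc_choose_mul_one_sub_pow_mul_pow (hKN : K ≤ N) (q : ℝ) :
    HasDerivAt (fun q : ℝ => ∑ m ∈ Icc K N, (N.choose m : ℝ) * (1 - q) ^ m * q ^ (N - m))
      (-(K * N.choose K * q ^ (N - K) * (1 - q) ^ (K - 1))) q := by
  have h := HasDerivAt.fun_sum fun m (_ : m ∈ Icc K N) =>
    hasDerivAt_choose_mul_one_sub_pow_mul_pow N m q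
  refine h.congr_deriv ?_
  rw [sum_Icc_sub (f := fun m : ℕ => m * (N.choose m : ℝ) * (1 - q) ^ (m - 1) * q ^ (N - m))
      hKN,
    Nat.choose_eq_zero_of_lt (Nat.lt_succ_self N)]
  push_cast; ring

theorem hasDerivAt_sum_orderStatCoeff_div_mul_one_sub_pow (hK : 1 ≤ K) (hKN : K ≤ N) (q : ℝ) :
    HasDerivAt (fun q : ℝ => ∑ j ∈ range K,
        orderStatCoeff N K j / orderStatRate N K j * (1 - q ^ (N - K + 1 + j)))
      (-(K * N.choose K * q ^ (N - K) * (1 - q) ^ (K - 1))) q := by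
  have h := HasDerivAt.fun_sum fun j (_ : j ∈ range K) =>
    ((hasDerivAt_pow (N - K + 1 + j) q).const_sub 1).const_mul
      (orderStatCoeff N K j / orderStatRate N K j)
  refine h.congr_deriv ?_
  rw [← sum_orderStatCoeff_mul_pow hK, ← sum_neg_distrib]
  refine sum_congr rfl fun j _ => ?_
  have hU := (orderStatRate_pos hKN j).ne'
  rw [orderStatRate_eq_natCast hKN] at hU ⊢
  rw [show N - K + 1 + j - 1 = N - K + j by omega]
  field_simp

theorem sum_Icc_choose_mul_one_sub_pow_mul_pow (hK : 1 ≤ K) (hKN : K ≤ N) (q : ℝ) :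
    ∑ m ∈ Icc K N, (N.choose m : ℝ) * (1 - q) ^ m * q ^ (N - m)
      = ∑ j ∈ range K,
          orderStatCoeff N K j / orderStatRate N K j * (1 - q ^ (N - K + 1 + j)) := by
  have hderiv (x : ℝ) := (hasDerivAt_sum_Icc_choose_mul_one_sub_pow_mul_pow hKN x).sub
    (hasDerivAt_sum_orderStatCoeff_div_mul_one_sub_pow hK hKN x)
  have hconst := is_const_of_deriv_eq_zero (fun x => (hderiv x).differentiableAt)
    (fun x => by rw [(hderiv x).deriv, sub_self]) q 1
  have hL1 : ∑ m ∈ Icc K N, (N.choose m : ℝ) * (1 - 1) ^ m * 1 ^ (N - m) = 0 :=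
    sum_eq_zero fun m hm => by
      rw [sub_self, zero_pow (by simp only [mem_Icc] at hm; omega)]; ring
  rw [Pi.sub_apply, Pi.sub_apply, hL1] at hconst
  simp only [one_pow, sub_self, mul_zero, sum_const_zero] at hconst
  linarith

theorem sum_orderStatCoeff_div_orderStatRate (hK : 1 ≤ K) (hKN : K ≤ N) :
    ∑ j ∈ range K, orderStatCoeff N K j / orderStatRate N K j = 1 := by
  have h := sum_Icc_choose_mul_one_sub_pow_mul_pow hK hKN 0
  rw [sum_eq_single_of_mem N (right_mem_Icc.mpr hKN) fun m hm hmN => by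
    rw [zero_pow (by simp only [mem_Icc] at hm; omega)]; ring] at h
  simp only [Nat.choose_self, Nat.sub_self, pow_zero, sub_zero, one_pow, Nat.cast_one,
    mul_one] at h
  rw [h]
  refine sum_congr rfl fun j _ => ?_
  rw [zero_pow (by omega), sub_zero, mul_one]

end BinomialTail

section OrderStatistic

open Finset

variable {N K : ℕ}

theorem exists_setOf_le_card_filter_le_eq_Ici (hK : 1 ≤ K) (hKN : K ≤ N) (v : Fin N → ℝ) :
    ∃ a, {x : ℝ | K ≤ #{i | v i ≤ x}} = Set.Ici a := by
  set S := {x : ℝ | K ≤ #{i | v i ≤ x}}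
  have hmono : Monotone fun x : ℝ => #{i | v i ≤ x} := fun x y hxy =>
    card_le_card (monotone_filter_right _ fun _ _ hi => hi.trans hxy)
  have hN : (univ : Finset (Fin N)).Nonempty := univ_nonempty_iff.mpr ⟨⟨0, by omega⟩⟩
  obtain ⟨imax, -, himax⟩ := exists_max_image univ v hN
  have hF : ({i | v i ∈ S} : Finset (Fin N)).Nonempty :=
    ⟨imax, mem_filter.mpr ⟨mem_univ _, by
      simpa [S, filter_true_of_mem fun i _ => himax i (mem_univ i)] using hKN⟩⟩
  -- the left end of the ray is the least `v i` lying in it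
  refine ⟨({i | v i ∈ S} : Finset (Fin N)).inf' hF v,
    Set.ext fun x => ⟨fun hx => ?_, fun hx => ?_⟩⟩
  · have hpos : ({i | v i ≤ x} : Finset (Fin N)).Nonempty :=
      card_pos.mp (lt_of_lt_of_le hK hx)
    obtain ⟨j, hj, hjmax⟩ := exists_max_image _ v hpos
    have hjx : v j ≤ x := (mem_filter.mp hj).2
    have hjS : v j ∈ S := le_trans hx <| card_le_card <|
      monotone_filter_right _ fun i hi hix => hjmax i (mem_filter.mpr ⟨hi, hix⟩)
    exact (inf'_le v (mem_filter.mpr ⟨mem_univ j, hjS⟩)).trans hjx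
  · obtain ⟨i, hi, hia⟩ := exists_mem_eq_inf' hF v
    exact le_trans (mem_filter.mp hi).2 (hmono (hia ▸ hx))

theorem orderStat_le_iff {Ω : Type*} (hK : 1 ≤ K) (hKN : K ≤ N) (T : Fin N → Ω → ℝ) (ω : Ω)
    (t : ℝ) : orderStat T K ω ≤ t ↔ K ≤ #{i | T i ω ≤ t} := by
  obtain ⟨a, ha⟩ := exists_setOf_le_card_filter_le_eq_Ici hK hKN (T · ω)
  simp only [orderStat, Nat.card_eq_fintype_card, Fintype.card_subtype, ha, csInf_Ici]
  exact (Set.ext_iff.mp ha t).symm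

theorem measurable_orderStat {Ω : Type*} [MeasurableSpace Ω] (hK : 1 ≤ K) (hKN : K ≤ N)
    {T : Fin N → Ω → ℝ} (hT : ∀ i, Measurable (T i)) : Measurable (orderStat T K) := by
  refine measurable_of_Iic fun t => ?_
  have hcard : Measurable fun ω => #{i | T i ω ≤ t} := by
    simp only [card_filter]
    exact Finset.measurable_sum _ fun i _ =>
      Measurable.ite (measurableSet_le (hT i) measurable_const) measurable_const measurable_const
  have hpre : orderStat T K ⁻¹' Set.Iic t = {ω | K ≤ #{i | T i ω ≤ t}} :=
    Set.ext fun ω => orderStat_le_iff hK hKN T ω t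
  rw [hpre]
  exact measurableSet_le measurable_const hcard

end OrderStatistic

section ProductMeasure

open Finset

variable {α : Type*} {A : Set α} [DecidablePred (· ∈ A)]

theorem setOf_filter_mem_eq_univ_pi {ι : Type*} [Fintype ι] [DecidableEq ι] (s : Finset ι) :
    {x : ι → α | ({i | x i ∈ A} : Finset ι) = s}
      = Set.univ.pi fun i => if i ∈ s then A else Aᶜ := by
  ext x
  simp only [Finset.ext_iff, mem_filter, mem_univ, true_and, Set.mem_ofPred_eq, Set.mem_pi,
    Set.mem_univ, forall_const]
  refine forall_congr' fun i => ?_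
  split_ifs with hi <;> simp [hi]

variable [MeasurableSpace α] (μ : Measure α) [SigmaFinite μ] {N : ℕ}

theorem pi_setOf_filter_mem_eq (s : Finset (Fin N)) :
    Measure.pi (fun _ : Fin N => μ) {x | ({i | x i ∈ A} : Finset (Fin N)) = s}
      = μ A ^ #s * μ Aᶜ ^ (N - #s) := by
  rw [setOf_filter_mem_eq_univ_pi, Measure.pi_pi, prod_apply_ite, prod_const, prod_const,
    filter_mem_eq_inter, univ_inter, filter_not, filter_mem_eq_inter, univ_inter, card_univ_sdiff,
    Fintype.card_fin]

theorem pi_setOf_le_card_filter_mem (hA : MeasurableSet A) (K : ℕ) :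
    Measure.pi (fun _ : Fin N => μ) {x | K ≤ #{i | x i ∈ A}}
      = ∑ m ∈ Icc K N, (N.choose m : ENNReal) * μ A ^ m * μ Aᶜ ^ (N - m) := by
  let count : (Fin N → α) → Finset (Fin N) := fun x => {i | x i ∈ A}
  have hfiber (s : Finset (Fin N)) : MeasurableSet (count ⁻¹' {s}) := by
    rw [show count ⁻¹' {s} = _ from setOf_filter_mem_eq_univ_pi s]
    exact MeasurableSet.univ_pi fun i => by split_ifs <;> simp [hA, hA.compl]
  have hset : {x | K ≤ #{i | x i ∈ A}}
      = count ⁻¹' ↑(univ.filter fun s : Finset (Fin N) => K ≤ #s) := by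
    ext x; simp [count]
  rw [hset, ← sum_measure_preimage_singleton _ fun s _ => hfiber s]
  calc ∑ s ∈ univ with K ≤ #s, Measure.pi (fun _ : Fin N => μ) (count ⁻¹' {s})
      = ∑ s ∈ (univ : Finset (Fin N)).powerset,
          if K ≤ #s then μ A ^ #s * μ Aᶜ ^ (N - #s) else 0 := by
        rw [sum_filter, powerset_univ]
        exact sum_congr rfl fun s _ => by rw [← pi_setOf_filter_mem_eq]; rfl
    _ = ∑ m ∈ range (N + 1), if K ≤ m then (N.choose m : ENNReal) * μ A ^ m * μ Aᶜ ^ (N - m)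
          else 0 := by
        rw [sum_powerset_apply_card (fun m => if K ≤ m then μ A ^ m * μ Aᶜ ^ (N - m) else 0),
          card_univ, Fintype.card_fin]
        refine sum_congr rfl fun m _ => ?_
        split_ifs <;> simp [nsmul_eq_mul, mul_assoc]
    _ = ∑ m ∈ Icc K N, (N.choose m : ENNReal) * μ A ^ m * μ Aᶜ ^ (N - m) := by
        rw [← sum_filter]
        congr 1
        ext m
        simp only [mem_filter, mem_range, mem_Icc]
        omega

end ProductMeasure

section ShiftedExponential

variable {l c t : ℝ}

theorem shiftedExp_Iic_of_le (htc : t ≤ c) : shiftedExp l c (Set.Iic t) = 0 := by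
  rw [shiftedExp, withDensity_apply _ measurableSet_Iic]
  refine setLIntegral_eq_zero measurableSet_Iic fun s hs => ?_
  rw [if_neg (not_lt.mpr (le_trans hs htc)), ENNReal.ofReal_zero, Pi.zero_apply]

theorem shiftedExp_Ioi (hl : 0 < l) (hct : c ≤ t) :
    shiftedExp l c (Set.Ioi t) = ENNReal.ofReal (exp (-l * (t - c))) := by
  have hdens : ∀ s ∈ Set.Ioi t, (if c < s then l * exp (-l * (s - c)) else 0)
      = l * exp (l * c) * exp (-l * s) := fun s hs => by
    rw [if_pos (hct.trans_lt hs), mul_assoc, ← exp_add]; ring_nf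
  have hint : IntegrableOn (fun s => l * exp (l * c) * exp (-l * s)) (Set.Ioi t) :=
    (integrableOn_exp_mul_Ioi (neg_lt_zero.mpr hl) t).const_mul _
  rw [shiftedExp, withDensity_apply _ measurableSet_Ioi,
    setLIntegral_congr_fun measurableSet_Ioi fun s hs => by rw [hdens s hs],
    ← ofReal_integral_eq_lintegral_ofReal hint (ae_of_all _ fun s => by positivity),
    integral_const_mul, integral_exp_mul_Ioi (neg_lt_zero.mpr hl)]
  congr 1
  field_simp
  rw [← exp_add]; ring_nf

theorem isProbabilityMeasure_shiftedExp (hl : 0 < l) :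
    IsProbabilityMeasure (shiftedExp l c) := by
  constructor
  rw [← Set.Iic_union_Ioi (a := c), measure_union (Set.Iic_disjoint_Ioi le_rfl) measurableSet_Ioi,
    shiftedExp_Iic_of_le le_rfl, shiftedExp_Ioi hl le_rfl, sub_self, mul_zero, exp_zero,
    ENNReal.ofReal_one, zero_add]

theorem shiftedExp_Iic (hl : 0 < l) (hct : c ≤ t) :
    shiftedExp l c (Set.Iic t) = ENNReal.ofReal (1 - exp (-l * (t - c))) := by
  have := isProbabilityMeasure_shiftedExp (c := c) hl
  rw [← Set.compl_Ioi, prob_compl_eq_one_sub measurableSet_Ioi, shiftedExp_Ioi hl hct,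
    ENNReal.ofReal_sub _ (exp_pos _).le, ENNReal.ofReal_one]

end ShiftedExponential

section ExponentialIntegrals

variable {a : ℝ}

theorem integral_exp_neg_mul_sub (ha : a ≠ 0) (c t : ℝ) :
    ∫ x in c..t, exp (-a * (x - c)) = (1 - exp (-a * (t - c))) / a := by
  have hderiv (x : ℝ) :
      HasDerivAt (fun x => -exp (-a * (x - c)) / a) (exp (-a * (x - c))) x := by
    have h := ((((hasDerivAt_id' x).sub_const c).const_mul (-a)).exp.neg).div_const a
    refine h.congr_deriv ?_
    field_simp
  have hcont : Continuous fun x => exp (-a * (x - c)) := by fun_prop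
  rw [intervalIntegral.integral_eq_sub_of_hasDerivAt (fun x _ => hderiv x)
    (hcont.intervalIntegrable c t), sub_self, mul_zero, exp_zero]
  ring

theorem integral_sq_mul_exp_neg_mul_sub (ha : a ≠ 0) (c t : ℝ) :
    ∫ x in c..t, x ^ 2 * exp (-a * (x - c))
      = ((1 + a * c) ^ 2 + 1 - ((1 + a * t) ^ 2 + 1) * exp (-a * (t - c))) / a ^ 3 := by
  have hderiv (x : ℝ) :
      HasDerivAt (fun x => -((1 + a * x) ^ 2 + 1) * exp (-a * (x - c)) / a ^ 3)
        (x ^ 2 * exp (-a * (x - c))) x := by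
    have hpoly := ((((hasDerivAt_id' x).const_mul a).const_add 1).pow 2).add_const 1
    have h := ((hpoly.neg).mul (((hasDerivAt_id' x).sub_const c).const_mul (-a)).exp).div_const
      (a ^ 3)
    refine h.congr_deriv ?_
    simp only [Pi.pow_apply, Pi.neg_apply]
    field_simp
    ring
  have hcont : Continuous fun x => x ^ 2 * exp (-a * (x - c)) := by fun_prop
  rw [intervalIntegral.integral_eq_sub_of_hasDerivAt (fun x _ => hderiv x)
    (hcont.intervalIntegrable c t), sub_self, mul_zero, exp_zero]
  ring

end ExponentialIntegrals

theorem integral_cond_preimage {Ω β E : Type*} [MeasurableSpace Ω] [MeasurableSpace β]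
    [NormedAddCommGroup E] [NormedSpace ℝ E] (P : Measure Ω) {Y : Ω → β} (hY : AEMeasurable Y P)
    {s : Set β} (hs : MeasurableSet s) {g : β → E} (hg : AEStronglyMeasurable g (P.map Y)) :
    ∫ ω, g (Y ω) ∂P[|Y ⁻¹' s] = (P.map Y s).toReal⁻¹ • ∫ x in s, g x ∂P.map Y := by
  rw [ProbabilityTheory.cond, integral_smul_measure, ENNReal.toReal_inv, setIntegral_map hs hg hY,
    Measure.map_apply_of_aemeasurable hY hs]

noncomputable def orderStatDensity (N K : ℕ) (l c : ℝ) : ℝ → ℝ :=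
  (Set.Ioi c).indicator fun t =>
    ∑ j ∈ Finset.range K, orderStatCoeff N K j * l * exp (-l * orderStatRate N K j * (t - c))

noncomputable abbrev orderStatLaw (N K : ℕ) (l c : ℝ) : Measure ℝ :=
  volume.withDensity fun t => ENNReal.ofReal (orderStatDensity N K l c t)

section Density

open Finset

variable {N K : ℕ} {l c t : ℝ}

theorem exp_neg_mul_orderStatRate_mul (hKN : K ≤ N) (j : ℕ) (s : ℝ) :
    exp (-l * orderStatRate N K j * s) = exp (-l * s) ^ (N - K + 1 + j) := by
  rw [← exp_nat_mul, orderStatRate_eq_natCast hKN]; ring_nf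

theorem orderStatDensity_nonneg (hK : 1 ≤ K) (hKN : K ≤ N) (hl : 0 < l) (t : ℝ) :
    0 ≤ orderStatDensity N K l c t := by
  refine Set.indicator_nonneg (fun t (ht : c < t) => ?_) t
  set q := exp (-l * (t - c))
  have hq1 : q ≤ 1 := exp_le_one_iff.mpr (by nlinarith)
  have hsum : ∑ j ∈ range K, orderStatCoeff N K j * l * exp (-l * orderStatRate N K j * (t - c))
      = l * q * (K * N.choose K * q ^ (N - K) * (1 - q) ^ (K - 1)) := by
    rw [← sum_orderStatCoeff_mul_pow hK, mul_sum]
    refine sum_congr rfl fun j _ => ?_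
    rw [exp_neg_mul_orderStatRate_mul hKN, show N - K + 1 + j = N - K + j + 1 by omega, pow_succ]
    ring
  rw [hsum]
  have : 0 ≤ 1 - q := by linarith
  positivity

theorem integral_Iic_orderStatDensity_mul {φ : ℝ → ℝ} (hφ : Continuous φ) (hct : c ≤ t) :
    ∫ x in Set.Iic t, orderStatDensity N K l c x * φ x
      = ∑ j ∈ range K, orderStatCoeff N K j * l *
          ∫ x in c..t, φ x * exp (-(l * orderStatRate N K j) * (x - c)) := by
  simp only [orderStatDensity, ← Set.indicator_mul_left]
  rw [setIntegral_indicator measurableSet_Ioi, Set.Iic_inter_Ioi,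
    ← intervalIntegral.integral_of_le hct]
  simp only [sum_mul]
  rw [intervalIntegral.integral_finsetSum fun j _ =>
    (by fun_prop : Continuous _).intervalIntegrable c t]
  refine sum_congr rfl fun j _ => ?_
  rw [← intervalIntegral.integral_const_mul]
  exact intervalIntegral.integral_congr fun x _ => by ring_nf

theorem integral_Iic_orderStatDensity_of_le (htc : t ≤ c) :
    ∫ x in Set.Iic t, orderStatDensity N K l c x = 0 :=
  setIntegral_eq_zero_of_forall_eq_zero fun x (hx : x ≤ t) =>
    Set.indicator_of_notMem (fun hcx : c < x => (hcx.trans_le (hx.trans htc)).false) _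

theorem integral_Iic_orderStatDensity (hKN : K ≤ N) (hl : 0 < l) (hct : c ≤ t) :
    ∫ x in Set.Iic t, orderStatDensity N K l c x
      = ∑ j ∈ range K, orderStatCoeff N K j / orderStatRate N K j
          * (1 - exp (-l * orderStatRate N K j * (t - c))) := by
  have h := integral_Iic_orderStatDensity_mul (N := N) (K := K) (l := l) (φ := fun _ => 1)
    continuous_const hct
  simp only [mul_one, one_mul] at h
  rw [h]
  refine sum_congr rfl fun j _ => ?_
  have hU := (orderStatRate_pos hKN j).ne'
  rw [integral_exp_neg_mul_sub (mul_ne_zero hl.ne' hU), neg_mul]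
  field_simp

theorem integrableOn_orderStatDensity_Iic (t : ℝ) :
    IntegrableOn (orderStatDensity N K l c) (Set.Iic t) := by
  rw [orderStatDensity, integrableOn_indicator_iff measurableSet_Ioi, Set.Ioi_inter_Iic]
  exact (by fun_prop : Continuous _).integrableOn_Ioc

theorem orderStatLaw_Iic (hK : 1 ≤ K) (hKN : K ≤ N) (hl : 0 < l) (t : ℝ) :
    orderStatLaw N K l c (Set.Iic t)
      = ENNReal.ofReal (∫ x in Set.Iic t, orderStatDensity N K l c x) := by
  rw [withDensity_apply _ measurableSet_Iic, ofReal_integral_eq_lintegral_ofReal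
    (integrableOn_orderStatDensity_Iic t) (ae_of_all _ (orderStatDensity_nonneg hK hKN hl))]

theorem setIntegral_Iic_sq_orderStatLaw (hK : 1 ≤ K) (hKN : K ≤ N) (hl : 0 < l)
    (hct : c ≤ t) :
    ∫ x in Set.Iic t, x ^ 2 ∂orderStatLaw N K l c
      = ∑ j ∈ range K, (orderStatCoeff N K j / (l ^ 2 * orderStatRate N K j ^ 3))
          * ((1 + c * l * orderStatRate N K j) ^ 2 + 1
            - ((1 + t * l * orderStatRate N K j) ^ 2 + 1)
              * exp (-l * orderStatRate N K j * (t - c))) := by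
  have hmeas : Measurable fun x => (orderStatDensity N K l c x).toNNReal :=
    ((by fun_prop : Continuous _).measurable.indicator measurableSet_Ioi).real_toNNReal
  rw [orderStatLaw, show (fun x => ENNReal.ofReal (orderStatDensity N K l c x))
      = fun x => ((orderStatDensity N K l c x).toNNReal : ENNReal) from rfl,
    setIntegral_withDensity_eq_setIntegral_smul hmeas _ measurableSet_Iic]
  simp only [NNReal.smul_def, Real.coe_toNNReal _ (orderStatDensity_nonneg hK hKN hl _),
    smul_eq_mul]
  rw [integral_Iic_orderStatDensity_mul (continuous_pow 2) hct]
  refine sum_congr rfl fun j _ => ?_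
  have hU := (orderStatRate_pos hKN j).ne'
  rw [integral_sq_mul_exp_neg_mul_sub (mul_ne_zero hl.ne' hU), neg_mul]
  field_simp

theorem map_orderStat_pi_shiftedExp (hK : 1 ≤ K) (hKN : K ≤ N) (hl : 0 < l) :
    (Measure.pi fun _ : Fin N => shiftedExp l c).map (orderStat (fun i x => x i) K)
      = orderStatLaw N K l c := by
  have := isProbabilityMeasure_shiftedExp (c := c) hl
  have hmeas :=
    measurable_orderStat hK hKN (T := fun i (x : Fin N → ℝ) => x i) measurable_pi_apply
  have := Measure.isProbabilityMeasure_map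
    (μ := Measure.pi fun _ : Fin N => shiftedExp l c) hmeas.aemeasurable
  refine Measure.ext_of_Iic _ _ fun t => ?_
  have hpre : orderStat (fun i x => x i) K ⁻¹' Set.Iic t
      = {x : Fin N → ℝ | K ≤ #{i | x i ∈ Set.Iic t}} :=
    Set.ext fun x => orderStat_le_iff hK hKN _ x t
  rw [Measure.map_apply hmeas measurableSet_Iic, hpre,
    pi_setOf_le_card_filter_mem (A := Set.Iic t) _ measurableSet_Iic, Set.compl_Iic,
    orderStatLaw_Iic hK hKN hl]
  rcases le_or_gt t c with htc | hct
  · rw [shiftedExp_Iic_of_le htc, integral_Iic_orderStatDensity_of_le htc, ENNReal.ofReal_zero]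
    exact sum_eq_zero fun m hm => by
      rw [zero_pow (by simp only [mem_Icc] at hm; omega)]; simp
  · have hq1 : exp (-l * (t - c)) ≤ 1 := exp_le_one_iff.mpr (by nlinarith)
    have hq1' : 0 ≤ 1 - exp (-l * (t - c)) := by linarith
    rw [shiftedExp_Iic hl hct.le, shiftedExp_Ioi hl hct.le,
      integral_Iic_orderStatDensity hKN hl hct.le]
    simp only [exp_neg_mul_orderStatRate_mul hKN]
    rw [← sum_Icc_choose_mul_one_sub_pow_mul_pow hK hKN,
      ENNReal.ofReal_sum_of_nonneg fun m _ => by positivity]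
    refine sum_congr rfl fun m _ => ?_
    rw [ENNReal.ofReal_mul (by positivity), ENNReal.ofReal_mul (by positivity),
      ENNReal.ofReal_pow hq1', ENNReal.ofReal_pow (exp_pos _).le, ENNReal.ofReal_natCast]

end Density

theorem cond_second_moment_orderStat_fixed_deadline_general
    {Ω : Type*} [MeasurableSpace Ω] (P : MeasureTheory.Measure Ω) [IsProbabilityMeasure P]
    (N K : ℕ) (hK : 1 ≤ K) (hKN : K ≤ N)
    (l c TD : ℝ) (hl : 0 < l) (hTD : c < TD)
    (T : Fin N → Ω → ℝ) (hT : ∀ i, Measurable (T i))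
    (hlaw : MeasureTheory.Measure.map (fun ω i => T i ω) P
      = MeasureTheory.Measure.pi (fun _ : Fin N => shiftedExp l c))
    (B : ℕ → ℝ) (hB : ∀ j, B j = (K : ℝ) * (N.choose K : ℝ) * ((K - 1).choose j : ℝ) * (-1) ^ j)
    (U : ℕ → ℝ) (hU : ∀ j, U j = (N : ℝ) - K + 1 + j)
    (Z : ℝ) (hZ : Z = ∑ i ∈ Finset.range K, B i * Real.exp (-l * U i * (TD - c)) / U i) :
    (∫ ω, (orderStat T K ω) ^ 2 ∂(P[|{ω | orderStat T K ω < TD}]))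
      = (1 / (1 - Z)) * ∑ j ∈ Finset.range K,
          (B j / (l ^ 2 * (U j) ^ 3))
            * ((1 + c * l * U j) ^ 2 + 1
                - ((1 + TD * l * U j) ^ 2 + 1) * Real.exp (-l * U j * (TD - c))) := by
  obtain rfl : B = orderStatCoeff N K := funext hB
  obtain rfl : U = orderStatRate N K := funext hU
  have hY : Measurable (orderStat T K) := measurable_orderStat hK hKN hT
  have hlawK : P.map (orderStat T K) = orderStatLaw N K l c := by
    rw [← map_orderStat_pi_shiftedExp hK hKN hl, ← hlaw,
      Measure.map_map (measurable_orderStat hK hKN measurable_pi_apply) (measurable_pi_lambda _ hT)]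
    rfl
  have hmass : ∫ x in Set.Iic TD, orderStatDensity N K l c x = 1 - Z := by
    simp only [integral_Iic_orderStatDensity hKN hl hTD.le, mul_sub, mul_one,
      Finset.sum_sub_distrib, sum_orderStatCoeff_div_orderStatRate hK hKN, hZ]
    exact congrArg _ (Finset.sum_congr rfl fun j _ => by ring)
  have hmass_nonneg : 0 ≤ 1 - Z :=
    hmass ▸ setIntegral_nonneg measurableSet_Iic fun x _ => orderStatDensity_nonneg hK hKN hl x
  rw [show {ω | orderStat T K ω < TD} = orderStat T K ⁻¹' Set.Iio TD from rfl,
    integral_cond_preimage (g := (· ^ 2)) P hY.aemeasurable measurableSet_Iio (by fun_prop),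
    hlawK, measure_congr Iio_ae_eq_Iic, setIntegral_congr_set Iio_ae_eq_Iic,
    orderStatLaw_Iic hK hKN hl, hmass, ENNReal.toReal_ofReal hmass_nonneg,
    setIntegral_Iic_sq_orderStatLaw hK hKN hl hTD.le, smul_eq_mul, one_div]

theorem cond_second_moment_orderStat_fixed_deadline
    {Ω : Type*} [MeasurableSpace Ω] (P : MeasureTheory.Measure Ω) [IsProbabilityMeasure P]
    (N K : ℕ) (hK : 1 ≤ K) (hKN : K ≤ N)
    (l c TD : ℝ) (hl : 0 < l) (hc : 0 ≤ c) (hTD : c < TD)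
    (T : Fin N → Ω → ℝ) (hT : ∀ i, Measurable (T i))
    (hlaw : MeasureTheory.Measure.map (fun ω i => T i ω) P
      = MeasureTheory.Measure.pi (fun _ : Fin N => shiftedExp l c))
    (B : ℕ → ℝ) (hB : ∀ j, B j = (K : ℝ) * (N.choose K : ℝ) * ((K - 1).choose j : ℝ) * (-1) ^ j)
    (U : ℕ → ℝ) (hU : ∀ j, U j = (N : ℝ) - K + 1 + j)
    (Z : ℝ) (hZ : Z = ∑ i ∈ Finset.range K, B i * Real.exp (-l * U i * (TD - c)) / U i) :
    (∫ ω, (orderStat T K ω) ^ 2 ∂(P[|{ω | orderStat T K ω < TD}]))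
      = (1 / (1 - Z)) * ∑ j ∈ Finset.range K,
          (B j / (l ^ 2 * (U j) ^ 3))
            * ((1 + c * l * U j) ^ 2 + 1
                - ((1 + TD * l * U j) ^ 2 + 1) * Real.exp (-l * U j * (TD - c))) :=
  cond_second_moment_orderStat_fixed_deadline_general P N K hK hKN l c TD hl hTD T hT hlaw B hB U hU
    Z hZ
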